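/- arXiv:2006.11262 — 4 statements merged into one kernel-verified Lean document; each statement's English description precedes it below -/
import Mathlib

section
/- Let a, b, c, d be four points in the plane with a having strictly larger y-coordinate than b, c, and d, and with the x-coordinate of b either strictly smaller than the x-coordinates of both c and d, or strictly larger than the x-coordinates of both c and d. If additionally a lies strictly above the line through b and c while d lies strictly below the line through b and c, then the closed segments ab and cd do not intersect. -/
/-!
The height above the line `bc` is an affine function vanishing at `b` and `c`, positive at `a`
and negative at `d`. On `ab` it is therefore nonnegative and vanishes only at `b`, on `cd` it is
nonpositive and vanishes only at `c`; a common point would force `b = c`, which `b.1 ≠ c.1`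
rules out.
-/

section

variable {𝕜 E : Type*} [Field 𝕜] [LinearOrder 𝕜] [IsStrictOrderedRing 𝕜]
  [AddCommGroup E] [Module 𝕜 E]

theorem eq_of_mem_segment_of_affine_apply_eq_zero {f : E →ᵃ[𝕜] 𝕜} {a b x : E}
    (hx : x ∈ segment 𝕜 a b) (ha : f a ≠ 0) (hb : f b = 0) (hfx : f x = 0) : x = b := by
  obtain ⟨t, s, -, -, hts, rfl⟩ := hx
  have ht : t = 0 := by
    simpa [Convex.combo_affine_apply hts, hb, ha] using hfx
  obtain rfl : s = 1 := by linear_combination hts - ht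
  simp [ht]

theorem segment_inter_segment_eq_empty_of_affine_separates (f : E →ᵃ[𝕜] 𝕜) {a b c d : E}
    (ha : 0 < f a) (hb : f b = 0) (hc : f c = 0) (hd : f d < 0) (hbc : b ≠ c) :
    segment 𝕜 a b ∩ segment 𝕜 c d = ∅ := by
  refine Set.eq_empty_of_forall_notMem fun x ⟨hxab, hxcd⟩ => hbc ?_
  have hfx_nonneg : 0 ≤ f x := by
    have := image_segment 𝕜 f a b ▸ Set.mem_image_of_mem f hxab
    rw [hb, segment_symm, segment_eq_Icc ha.le] at this
    exact this.1
  have hfx_nonpos : f x ≤ 0 := by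
    have := image_segment 𝕜 f d c ▸ Set.mem_image_of_mem f (segment_symm 𝕜 c d ▸ hxcd)
    rw [hc, segment_eq_Icc hd.le] at this
    exact this.2
  have hfx : f x = 0 := le_antisymm hfx_nonpos hfx_nonneg
  rw [← eq_of_mem_segment_of_affine_apply_eq_zero hxab ha.ne' hb hfx,
    eq_of_mem_segment_of_affine_apply_eq_zero (segment_symm 𝕜 c d ▸ hxcd) hd.ne hc hfx]

end

noncomputable def heightAboveLine (b c : ℝ × ℝ) : ℝ × ℝ →ᵃ[ℝ] ℝ where
  toFun p := p.2 - (b.2 + (c.2 - b.2) / (c.1 - b.1) * (p.1 - b.1))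
  linear := LinearMap.snd ℝ ℝ ℝ - ((c.2 - b.2) / (c.1 - b.1)) • LinearMap.fst ℝ ℝ ℝ
  map_vadd' p v := by
    simp only [vadd_eq_add, Prod.snd_add, Prod.fst_add, LinearMap.sub_apply, LinearMap.snd_apply,
      LinearMap.smul_apply, LinearMap.fst_apply, smul_eq_mul]
    ring

theorem stmt_3_general (a b c d : ℝ × ℝ)
    (hx : (b.1 < c.1 ∧ b.1 < d.1) ∨ (c.1 < b.1 ∧ d.1 < b.1))
    (habove : b.2 + (c.2 - b.2) / (c.1 - b.1) * (a.1 - b.1) < a.2)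
    (hbelow : d.2 < b.2 + (c.2 - b.2) / (c.1 - b.1) * (d.1 - b.1)) :
    segment ℝ a b ∩ segment ℝ c d = ∅ := by
  have hbc : c.1 - b.1 ≠ 0 := by
    rcases hx with ⟨h, -⟩ | ⟨h, -⟩ <;> linarith
  refine segment_inter_segment_eq_empty_of_affine_separates (heightAboveLine b c)
    (sub_pos.2 habove) ?_ ?_ (sub_neg.2 hbelow) fun h => hbc (by rw [h, sub_self])
  · simp [heightAboveLine]
  · simp [heightAboveLine, div_mul_cancel₀ _ hbc]

/-- Let `a, b, c, d ∈ ℝ²` with `a` strictly higher than `b, c, d`, and with the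
`x`-coordinate of `b` strictly smaller than those of both `c` and `d`, or strictly
larger than both. If moreover `a` lies strictly above the line through `b` and `c`
while `d` lies strictly below it, then the closed segments `ab` and `cd` are disjoint. -/
theorem stmt_3 (a b c d : ℝ × ℝ)
    (hba : b.2 < a.2) (hca : c.2 < a.2) (hda : d.2 < a.2)
    (hx : (b.1 < c.1 ∧ b.1 < d.1) ∨ (c.1 < b.1 ∧ d.1 < b.1))
    (habove : b.2 + (c.2 - b.2) / (c.1 - b.1) * (a.1 - b.1) < a.2)
    (hbelow : d.2 < b.2 + (c.2 - b.2) / (c.1 - b.1) * (d.1 - b.1)) :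
    segment ℝ a b ∩ segment ℝ c d = ∅ :=
  stmt_3_general a b c d hx habove hbelow
end

section
/- For every positive integer h ≥ 2 and every n ≥ 3h², any convex geometric graph on n vertices that is universal for the family of n-vertex outerplanar graphs consisting of a spanning cycle plus h pairwise vertex-disjoint chords has at least c_h · n^(2-1/h) edges, for some constant c_h > 0 depending only on h. -/
/-- Adjacency along the cycle `v_0, …, v_{n-1}` of points in convex position. -/
def cycAdj {n : ℕ} (i j : Fin n) : Prop :=
  i ≠ j ∧ (((i : ℕ) + 1) % n = (j : ℕ) ∨ ((j : ℕ) + 1) % n = (i : ℕ))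

/-- Two chords of a convex polygon (vertices in circular order `0, …, n-1`) cross
iff their endpoints interleave. -/
def chordsCross {n : ℕ} (a b c d : Fin n) : Prop :=
  (min a b < min c d ∧ min c d < max a b ∧ max a b < max c d) ∨
  (min c d < min a b ∧ min a b < max c d ∧ max c d < max a b)

/-- A crossing-free embedding of the graph `H` into the convex geometric graph `G`. -/
def IsPlaneEmb {n : ℕ} (H G : SimpleGraph (Fin n)) (f : Fin n → Fin n) : Prop :=
  Function.Injective f ∧ (∀ u v, H.Adj u v → G.Adj (f u) (f v)) ∧
  ∀ u v x y, H.Adj u v → H.Adj x y →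
    u ≠ x → u ≠ y → v ≠ x → v ≠ y → ¬ chordsCross (f u) (f v) (f x) (f y)

/-- `G` is universal for a family `F` of graphs. -/
def UniversalFor {n : ℕ} (G : SimpleGraph (Fin n)) (F : Set (SimpleGraph (Fin n))) : Prop :=
  ∀ H ∈ F, ∃ f, IsPlaneEmb H G f

/-- The family `O_h(n)` of `n`-vertex outerplanar graphs consisting of a spanning
cycle plus `h` pairwise vertex-disjoint (noncrossing) chords. -/
def Ofam (h n : ℕ) : Set (SimpleGraph (Fin n)) :=
  {H | ∃ (g : Fin n ≃ Fin n) (D : Finset (Fin n × Fin n)),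
    D.card = h ∧
    (∀ p ∈ D, p.1 ≠ p.2 ∧ ¬ cycAdj p.1 p.2) ∧
    (∀ p ∈ D, ∀ q ∈ D, p ≠ q →
      p.1 ≠ q.1 ∧ p.1 ≠ q.2 ∧ p.2 ≠ q.1 ∧ p.2 ≠ q.2 ∧
      ¬ chordsCross p.1 p.2 q.1 q.2) ∧
    ∀ u v, H.Adj u v ↔ (cycAdj (g u) (g v) ∨ (g u, g v) ∈ D ∨ (g v, g u) ∈ D)}

/-!
An embedding of a graph containing the Hamiltonian cycle `0, 1, …, n - 1` must map that cycle onto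
the boundary of the polygon: an edge mapped to a diagonal separates the other vertices into two
nonempty sides, so the rest of the cycle would have to cross it. Hence the embedding is one of the
`2n` symmetries of the `n`-gon.

Split the polygon into `h` blocks of length `m = ⌊n / h⌋` and put into block `i` a chord from one of
`r = ⌊m / 3⌋` positions on the left to one of `r` positions on the right. These `r ^ (2h)` graphs
lie in `O_h(n)`; each is carried into `G` by a symmetry, and the symmetry together with the `h`
image edges determines the graph. So `r ^ (2h) ≤ 2n |E(G)| ^ h`, and `r ≥ n / (6h)` gives
`|E(G)| ≥ c_h n ^ (2 - 1/h)`.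
-/

open Finset Fin.CommRing

section Chords

variable {n : ℕ}

lemma chordsCross_iff_val (a b c d : Fin n) :
    chordsCross a b c d ↔
      (min a.val b.val < min c.val d.val ∧ min c.val d.val < max a.val b.val ∧
          max a.val b.val < max c.val d.val) ∨
        (min c.val d.val < min a.val b.val ∧ min a.val b.val < max c.val d.val ∧
          max c.val d.val < max a.val b.val) := by
  simp only [chordsCross, Fin.lt_def, Fin.coe_min, Fin.coe_max]

lemma chordsCross_comm (a b c d : Fin n) : chordsCross a b c d ↔ chordsCross c d a b :=
  or_comm

lemma not_chordsCross_of_lt_of_lt_of_lt {a b c d : Fin n} (hab : a < b) (hbc : b < c)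
    (hcd : c < d) : ¬chordsCross a b c d := by
  rw [chordsCross_iff_val]
  omega

lemma chordsCross_of_mem_Ioo_iff_notMem {a b c d : Fin n} (hc : c ≠ a ∧ c ≠ b)
    (hd : d ≠ a ∧ d ≠ b)
    (h : c ∈ Set.Ioo (min a b) (max a b) ↔ d ∉ Set.Ioo (min a b) (max a b)) :
    chordsCross a b c d := by
  simp only [Set.mem_Ioo, Fin.lt_def, Fin.coe_min, Fin.coe_max, ne_eq, Fin.ext_iff] at hc hd h
  rw [chordsCross_iff_val]
  omega

end Chords

lemma Nat.add_one_mod_eq_ite {k n : ℕ} (hk : k < n) :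
    (k + 1) % n = if k + 1 = n then 0 else k + 1 := by
  split_ifs with h
  · rw [h, Nat.mod_self]
  · exact Nat.mod_eq_of_lt (by omega)

lemma Fin.val_one_of_two_le {n : ℕ} [NeZero n] (hn : 2 ≤ n) : (1 : Fin n).val = 1 := by
  rw [Fin.val_one', Nat.mod_eq_of_lt hn]

section CycleAdjacency

variable {n : ℕ}

lemma cycAdj_symm {a b : Fin n} (h : cycAdj a b) : cycAdj b a :=
  ⟨h.1.symm, h.2.symm⟩

lemma cycAdj_iff_val {a b : Fin n} :
    cycAdj a b ↔ a ≠ b ∧ (a.val + 1 = b.val ∨ b.val + 1 = a.val ∨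
      (a.val + 1 = n ∧ b.val = 0) ∨ (b.val + 1 = n ∧ a.val = 0)) := by
  rw [cycAdj, Nat.add_one_mod_eq_ite a.isLt, Nat.add_one_mod_eq_ite b.isLt]
  split_ifs <;> omega

lemma not_cycAdj_of_two_le {a b : Fin n} (hab : a.val + 2 ≤ b.val)
    (hba : b.val + 2 ≤ a.val + n) : ¬cycAdj a b := by
  rw [cycAdj_iff_val]
  omega

lemma exists_mem_Ioo_and_notMem_Ioo_of_not_cycAdj {a b : Fin n} (hab : a ≠ b)
    (h : ¬cycAdj a b) :
    (∃ c, c ≠ a ∧ c ≠ b ∧ c ∈ Set.Ioo (min a b) (max a b)) ∧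
      ∃ d, d ≠ a ∧ d ≠ b ∧ d ∉ Set.Ioo (min a b) (max a b) := by
  rw [cycAdj_iff_val] at h
  have := b.isLt
  simp only [ne_eq, Fin.ext_iff, Set.mem_Ioo, Fin.lt_def, Fin.coe_min, Fin.coe_max]
  refine ⟨⟨⟨min a.val b.val + 1, by omega⟩, by simp only; omega⟩, ?_⟩
  by_cases ha : min a.val b.val = 0
  · exact ⟨⟨n - 1, by omega⟩, by simp only; omega⟩
  · exact ⟨⟨0, by omega⟩, by simp only; omega⟩

lemma cycAdj_iff_eq_add_one [NeZero n] (hn : 2 ≤ n) {a b : Fin n} :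
    cycAdj a b ↔ b = a + 1 ∨ a = b + 1 := by
  simp only [cycAdj, Fin.ext_iff, Fin.val_add, Fin.val_one_of_two_le hn, ne_eq]
  refine ⟨fun h => h.2.imp Eq.symm Eq.symm, fun h => ⟨fun hab => ?_, h.imp Eq.symm Eq.symm⟩⟩
  rw [hab, Nat.add_one_mod_eq_ite b.isLt] at h
  split_ifs at h <;> omega

end CycleAdjacency

lemma Nat.exists_between_iff_not_succ {P : ℕ → Prop} {a b : ℕ} (ha : P a) (hb : ¬P b) :
    ∃ k, min a b ≤ k ∧ k + 1 ≤ max a b ∧ (P k ↔ ¬P (k + 1)) := by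
  have key : ∀ {Q : ℕ → Prop} {a b : ℕ}, a ≤ b → Q a → ¬Q b →
      ∃ k, a ≤ k ∧ k + 1 ≤ b ∧ Q k ∧ ¬Q (k + 1) := by
    intro Q a b hab ha hb
    induction b, hab using Nat.le_induction with
    | base => exact absurd ha hb
    | succ b hab ih =>
      by_cases hQ : Q b
      · exact ⟨b, hab, le_rfl, hQ, hb⟩
      · obtain ⟨k, hk₁, hk₂, hk⟩ := ih hQ
        exact ⟨k, hk₁, by omega, hk⟩
  rcases le_total a b with hab | hba
  · obtain ⟨k, hk₁, hk₂, hk, hk'⟩ := key hab ha hb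
    exact ⟨k, by omega, by omega, iff_of_true hk hk'⟩
  · obtain ⟨k, hk₁, hk₂, hk, hk'⟩ := key (Q := fun k => ¬P k) hba hb (not_not.2 ha)
    exact ⟨k, by omega, by omega, iff_of_false hk hk'⟩

section NoncrossingCycle

variable {n : ℕ} [NeZero n]

def IsNoncrossingCycleMap (f : Fin n → Fin n) : Prop :=
  ∀ i j : Fin n, i ≠ j → i ≠ j + 1 → i + 1 ≠ j → i + 1 ≠ j + 1 →
    ¬chordsCross (f i) (f (i + 1)) (f j) (f (j + 1))

lemma IsPlaneEmb.isNoncrossingCycleMap {H G : SimpleGraph (Fin n)} {f : Fin n → Fin n}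
    (hf : IsPlaneEmb H G f) (hH : ∀ i, H.Adj i (i + 1)) : IsNoncrossingCycleMap f :=
  fun i j => hf.2.2 i (i + 1) j (j + 1) (hH i) (hH j)

lemma IsNoncrossingCycleMap.comp_add_left {f : Fin n → Fin n} (hf : IsNoncrossingCycleMap f)
    (t : Fin n) : IsNoncrossingCycleMap fun j => f (t + j) := by
  intro i j h₁ h₂ h₃ h₄
  have ht : ∀ {x y : Fin n}, x ≠ y → t + x ≠ t + y := (add_right_injective t).ne
  simpa only [add_assoc] using hf (t + i) (t + j) (ht h₁)
    (by rw [add_assoc]; exact ht h₂) (by rw [add_assoc]; exact ht h₃)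
    (by rw [add_assoc, add_assoc]; exact ht h₄)

lemma IsNoncrossingCycleMap.cycAdj_zero_one (hn : 2 ≤ n) {f : Fin n → Fin n}
    (hinj : Function.Injective f) (hf : IsNoncrossingCycleMap f) : cycAdj (f 0) (f 1) := by
  have h₁ := Fin.val_one_of_two_le hn
  have h01 : (0 : Fin n) ≠ 1 := by rw [Ne, Fin.ext_iff, Fin.val_zero, h₁]; omega
  by_contra hnadj
  set I := Set.Ioo (min (f 0) (f 1)) (max (f 0) (f 1))
  obtain ⟨⟨c, hc₀, hc₁, hc⟩, d, hd₀, hd₁, hd⟩ :=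
    exists_mem_Ioo_and_notMem_Ioo_of_not_cycAdj (hinj.ne h01) hnadj
  obtain ⟨kc, rfl⟩ := Finite.surjective_of_injective hinj c
  obtain ⟨kd, rfl⟩ := Finite.surjective_of_injective hinj d
  have hmid : ∀ k : Fin n, f k ≠ f 0 ∧ f k ≠ f 1 ↔ 2 ≤ k.val := by
    intro k
    simp only [hinj.ne_iff, ne_eq, Fin.ext_iff, Fin.val_zero, h₁]
    omega
  have hkc := (hmid kc).1 ⟨hc₀, hc₁⟩
  have hkd := (hmid kd).1 ⟨hd₀, hd₁⟩
  obtain ⟨k, hk₁, hk₂, hk⟩ := Nat.exists_between_iff_not_succ (P := fun k : ℕ => f k ∈ I)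
    (a := kc.val) (b := kd.val) (by simpa only [Fin.cast_val_eq_self])
    (by simpa only [Fin.cast_val_eq_self])
  have := kc.isLt
  have := kd.isLt
  set j : Fin n := (k : Fin n) with hj_def
  have hj : j.val = k := Fin.val_cast_of_lt (by omega)
  have hj₁ : (j + 1).val = k + 1 := by rw [Fin.val_add_one_of_lt' (by omega), hj]
  simp only [Nat.cast_succ, ← hj_def] at hk
  refine hf 0 j (Fin.ne_of_val_ne ?_) (Fin.ne_of_val_ne ?_) (Fin.ne_of_val_ne ?_)
    (Fin.ne_of_val_ne ?_) ?_
  · rw [Fin.val_zero, hj]; omega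
  · rw [Fin.val_zero, hj₁]; omega
  · rw [zero_add, h₁, hj]; omega
  · rw [zero_add, h₁, hj₁]; omega
  · rw [zero_add]
    exact chordsCross_of_mem_Ioo_iff_notMem ((hmid j).2 (by omega)) ((hmid (j + 1)).2 (by omega)) hk

lemma IsNoncrossingCycleMap.cycAdj_add_one (hn : 2 ≤ n) {f : Fin n → Fin n}
    (hinj : Function.Injective f) (hf : IsNoncrossingCycleMap f) (i : Fin n) :
    cycAdj (f i) (f (i + 1)) := by
  simpa using (hf.comp_add_left i).cycAdj_zero_one hn (hinj.comp (add_right_injective i))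

end NoncrossingCycle

section Dihedral

variable {n : ℕ} [NeZero n]

def dihedralMaps (n : ℕ) [NeZero n] : Finset (Fin n → Fin n) :=
  (univ.image fun t j => t + j) ∪ univ.image fun t j => t - j

lemma card_dihedralMaps_le : (dihedralMaps n).card ≤ 2 * n := by
  rw [two_mul]
  refine (card_union_le _ _).trans (add_le_add ?_ ?_) <;> exact card_image_le.trans (card_fin n).le

lemma injective_of_mem_dihedralMaps {ρ : Fin n → Fin n} (hρ : ρ ∈ dihedralMaps n) :
    Function.Injective ρ := by
  simp only [dihedralMaps, mem_union, mem_image, mem_univ, true_and] at hρ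
  rcases hρ with ⟨t, rfl⟩ | ⟨t, rfl⟩
  · exact add_right_injective t
  · exact sub_right_injective

/-- The steps `f (i + 1) - f i = ±1` are all equal: two opposite consecutive steps would give
`f (i + 2) = f i`. -/
lemma mem_dihedralMaps_of_cycAdj (hn : 3 ≤ n) {f : Fin n → Fin n} (hinj : Function.Injective f)
    (hf : ∀ i, cycAdj (f i) (f (i + 1))) : f ∈ dihedralMaps n := by
  set s : Fin n → Fin n := fun i => f (i + 1) - f i
  have h₁ := Fin.val_one_of_two_le (n := n) (by omega)
  have hs : ∀ i, s i = 1 ∨ s i = -1 := fun i =>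
    ((cycAdj_iff_eq_add_one (by omega)).1 (hf i)).imp (fun h => by simp [s, h])
      fun h => by simp [s, h]
  have h₂ : (1 + 1 : Fin n) ≠ 0 := Fin.ne_of_val_ne <| by
    rw [Fin.val_add, h₁, Fin.val_zero, Nat.mod_eq_of_lt (by omega)]
    omega
  have hs_succ : ∀ i, s (i + 1) = s i := by
    intro i
    by_contra hne
    have hsum : s (i + 1) + s i = 0 := by
      rcases hs i with h | h <;> rcases hs (i + 1) with h' | h' <;> rw [h, h'] at hne ⊢ <;>
        simp at hne ⊢
    have hback : f (i + 1 + 1) = f i := by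
      simp only [s] at hsum
      linear_combination hsum
    have := hinj hback
    rw [add_assoc, add_eq_left] at this
    exact h₂ this
  have hs_const : ∀ k : ℕ, s k = s 0 := by
    intro k
    induction k with
    | zero => simp
    | succ k ih => rw [Nat.cast_succ, hs_succ, ih]
  have hf_nat : ∀ k : ℕ, f k = f 0 + k * s 0 := by
    intro k
    induction k with
    | zero => simp
    | succ k ih =>
      have hstep : f ((k : Fin n) + 1) = f k + s k := by simp only [s, add_sub_cancel]
      rw [Nat.cast_succ, hstep, hs_const, ih]
      ring
  have hf_eq : ∀ j, f j = f 0 + j * s 0 := fun j => by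
    simpa only [Fin.cast_val_eq_self] using hf_nat j.val
  simp only [dihedralMaps, mem_union, mem_image, mem_univ, true_and]
  rcases hs 0 with h | h
  · exact Or.inl ⟨f 0, funext fun j => by rw [hf_eq j, h, mul_one]⟩
  · exact Or.inr ⟨f 0, funext fun j => by rw [hf_eq j, h, mul_neg_one, sub_eq_add_neg]⟩

end Dihedral

lemma card_le_card_mul_ncard_edgeSet_pow {X : Type*} {n h : ℕ} (G : SimpleGraph (Fin n))
    (S : Finset (Fin n → Fin n)) (hS : ∀ ρ ∈ S, Function.Injective ρ)
    (c : X → Fin h → Sym2 (Fin n)) (hc : Function.Injective c)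
    (hG : ∀ x, ∃ ρ ∈ S, ∀ i, (c x i).map ρ ∈ G.edgeSet) :
    Nat.card X ≤ S.card * G.edgeSet.ncard ^ h := by
  choose ρ hρS hρG using hG
  let Φ : X → S × (Fin h → G.edgeSet) := fun x => (⟨ρ x, hρS x⟩, fun i => ⟨_, hρG x i⟩)
  have hΦ : Function.Injective Φ := by
    intro x y hxy
    simp only [Φ, Prod.mk.injEq, Subtype.mk.injEq] at hxy
    obtain ⟨hρ, hedge⟩ := hxy
    refine hc (funext fun i => Sym2.map.injective (hS _ (hρS y)) ?_)
    have : (c x i).map (ρ x) = (c y i).map (ρ y) := congrArg Subtype.val (congrFun hedge i)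
    rwa [hρ] at this
  calc Nat.card X ≤ Nat.card (S × (Fin h → G.edgeSet)) := Nat.card_le_card_of_injective Φ hΦ
    _ = S.card * G.edgeSet.ncard ^ h := by
      rw [Nat.card_prod, Nat.card_fun, Nat.card_eq_finsetCard, Nat.card_coe_set_eq, Nat.card_fin]

section CycleWithChords

variable {n : ℕ}

def cycleWithChords (D : Finset (Fin n × Fin n)) : SimpleGraph (Fin n) :=
  SimpleGraph.fromRel fun u v => cycAdj u v ∨ (u, v) ∈ D

lemma cycleWithChords_mem_Ofam {h : ℕ} {D : Finset (Fin n × Fin n)} (hcard : D.card = h)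
    (hchord : ∀ p ∈ D, p.1 ≠ p.2 ∧ ¬cycAdj p.1 p.2)
    (hdisj : ∀ p ∈ D, ∀ q ∈ D, p ≠ q →
      p.1 ≠ q.1 ∧ p.1 ≠ q.2 ∧ p.2 ≠ q.1 ∧ p.2 ≠ q.2 ∧ ¬chordsCross p.1 p.2 q.1 q.2) :
    cycleWithChords D ∈ Ofam h n := by
  refine ⟨Equiv.refl _, D, hcard, hchord, hdisj, fun u v => ?_⟩
  simp only [cycleWithChords, SimpleGraph.fromRel_adj, Equiv.refl_apply]
  constructor
  · rintro ⟨-, (h | h) | (h | h)⟩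
    exacts [Or.inl h, Or.inr (Or.inl h), Or.inl (cycAdj_symm h), Or.inr (Or.inr h)]
  · rintro (h | h | h)
    exacts [⟨h.1, Or.inl (Or.inl h)⟩, ⟨(hchord _ h).1, Or.inl (Or.inr h)⟩,
      ⟨(hchord _ h).1.symm, Or.inr (Or.inr h)⟩]

lemma cycleWithChords_adj_of_mem {D : Finset (Fin n × Fin n)} {p : Fin n × Fin n}
    (hp : p ∈ D) (hp' : p.1 ≠ p.2) : (cycleWithChords D).Adj p.1 p.2 :=
  (SimpleGraph.fromRel_adj _ _ _).2 ⟨hp', Or.inl (Or.inr hp)⟩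

lemma cycleWithChords_image_mem_Ofam {h : ℕ} (c : Fin h → Fin n × Fin n)
    (hlen : ∀ i, (c i).1.val + 2 ≤ (c i).2.val) (hlen' : ∀ i, (c i).2.val + 2 ≤ (c i).1.val + n)
    (hsep : ∀ i j, i < j → (c i).2 < (c j).1) :
    cycleWithChords (univ.image c) ∈ Ofam h n := by
  have hord : ∀ i, (c i).1 < (c i).2 := fun i => by have := hlen i; omega
  have hmono : StrictMono fun i => (c i).1 := fun i j hij => (hord i).trans (hsep i j hij)
  refine cycleWithChords_mem_Ofam ?_ ?_ ?_
  · rw [card_image_of_injective _ fun i j hij => hmono.injective (congrArg Prod.fst hij),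
      card_univ, Fintype.card_fin]
  · simp only [mem_image, mem_univ, true_and, forall_exists_index, forall_apply_eq_imp_iff]
    exact fun i => ⟨(hord i).ne, not_cycAdj_of_two_le (hlen i) (hlen' i)⟩
  · simp only [mem_image, mem_univ, true_and, forall_exists_index, forall_apply_eq_imp_iff]
    intro i j hij
    have hi := hord i
    have hj := hord j
    rcases lt_or_gt_of_ne (mt (congrArg c) hij) with hlt | hlt
    · have := hsep i j hlt
      exact ⟨by omega, by omega, by omega, by omega,
        not_chordsCross_of_lt_of_lt_of_lt hi this hj⟩
    · have := hsep j i hlt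
      exact ⟨by omega, by omega, by omega, by omega, fun hcross =>
        not_chordsCross_of_lt_of_lt_of_lt hj this hi ((chordsCross_comm _ _ _ _).1 hcross)⟩

variable [NeZero n]

lemma cycleWithChords_adj_add_one (hn : 2 ≤ n) (D : Finset (Fin n × Fin n)) (i : Fin n) :
    (cycleWithChords D).Adj i (i + 1) := by
  have := (cycAdj_iff_eq_add_one hn).2 (Or.inl rfl : i + 1 = i + 1 ∨ _)
  exact (SimpleGraph.fromRel_adj _ _ _).2 ⟨this.1, Or.inl (Or.inl this)⟩

lemma IsPlaneEmb.mem_dihedralMaps (hn : 3 ≤ n) {D : Finset (Fin n × Fin n)}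
    {G : SimpleGraph (Fin n)} {f : Fin n → Fin n} (hf : IsPlaneEmb (cycleWithChords D) G f) :
    f ∈ dihedralMaps n :=
  mem_dihedralMaps_of_cycAdj hn hf.1 <|
    (hf.isNoncrossingCycleMap (cycleWithChords_adj_add_one (by omega) D)).cycAdj_add_one
      (by omega) hf.1

end CycleWithChords

def blockChord (n m r : ℕ) [NeZero n] {h : ℕ} (x : Fin h → Fin r × Fin r) (i : Fin h) :
    Fin n × Fin n :=
  (((i.val * m + (x i).1.val : ℕ) : Fin n), ((i.val * m + r + 1 + (x i).2.val : ℕ) : Fin n))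

section BlockChords

variable {n h m r : ℕ} [NeZero n]

lemma val_blockChord (hr : 2 * r + 1 ≤ m) (hm : h * m ≤ n) (x : Fin h → Fin r × Fin r)
    (i : Fin h) :
    (blockChord n m r x i).1.val = i.val * m + (x i).1.val ∧
      (blockChord n m r x i).2.val = i.val * m + r + 1 + (x i).2.val := by
  have := (x i).1.isLt
  have := (x i).2.isLt
  have : (i.val + 1) * m ≤ h * m := Nat.mul_le_mul_right m i.isLt
  exact ⟨Fin.val_cast_of_lt (by nlinarith), Fin.val_cast_of_lt (by nlinarith)⟩

lemma cycleWithChords_blockChord_mem_Ofam (hr : 2 * r + 1 ≤ m) (hm : h * m ≤ n)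
    (hmn : m + 2 ≤ n) (x : Fin h → Fin r × Fin r) :
    cycleWithChords (univ.image (blockChord n m r x)) ∈ Ofam h n := by
  have hval := val_blockChord hr hm x
  refine cycleWithChords_image_mem_Ofam _ (fun i => ?_) (fun i => ?_) fun i j hij => ?_
  · have := (x i).1.isLt
    have := hval i
    omega
  · have := (x i).2.isLt
    have := hval i
    omega
  · have := (x i).2.isLt
    have : (i.val + 1) * m ≤ j.val * m := Nat.mul_le_mul_right m hij
    rw [Fin.lt_def, (hval i).2, (hval j).1]
    nlinarith

lemma blockChord_injective (hr : 2 * r + 1 ≤ m) (hm : h * m ≤ n) :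
    Function.Injective fun (x : Fin h → Fin r × Fin r) i =>
      s((blockChord n m r x i).1, (blockChord n m r x i).2) := by
  intro x y hxy
  funext i
  have hx := val_blockChord hr hm x i
  have hy := val_blockChord hr hm y i
  have hr₁ := (x i).1.isLt
  have hr₂ := (y i).1.isLt
  rcases Sym2.eq_iff.1 (congrFun hxy i) with ⟨h₁, h₂⟩ | ⟨h₁, h₂⟩
  · rw [Fin.ext_iff, hx.1, hy.1] at h₁
    rw [Fin.ext_iff, hx.2, hy.2] at h₂
    exact Prod.ext (Fin.ext (by omega)) (Fin.ext (by omega))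
  · rw [Fin.ext_iff, hx.1, hy.2] at h₁
    rw [Fin.ext_iff, hx.2, hy.1] at h₂
    omega

end BlockChords
lemma le_mul_div_div {h n : ℕ} (hh : 0 < h) (hn : 3 * h ≤ n) : n ≤ 6 * h * (n / h / 3) := by
  set m := n / h
  set r := m / 3
  have hm₃ : 3 ≤ m := (Nat.le_div_iff_mul_le hh).2 (by linarith)
  have hnm : n < h * (m + 1) := Nat.lt_mul_div_succ n hh
  have hmr : h * (m + 1) ≤ h * (3 * r + 3) := Nat.mul_le_mul_left h (by omega)
  have hr : h * 3 ≤ h * (3 * r) := Nat.mul_le_mul_left h (by omega)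
  nlinarith

theorem pow_div_div_le_mul_ncard_edgeSet_pow {h n : ℕ} (hh : 2 ≤ h) (hn : 3 * h ≤ n)
    (G : SimpleGraph (Fin n)) (hG : UniversalFor G (Ofam h n)) :
    (n / h / 3) ^ (2 * h) ≤ 2 * n * G.edgeSet.ncard ^ h := by
  have : NeZero n := ⟨by omega⟩
  set m := n / h
  set r := m / 3
  have hm : h * m ≤ n := Nat.mul_div_le n h
  have hm₃ : 3 ≤ m := (Nat.le_div_iff_mul_le (by omega)).2 (by linarith)
  have hr : 2 * r + 1 ≤ m := by omega
  have hmn : m + 2 ≤ n := by nlinarith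
  have hcarry : ∀ x : Fin h → Fin r × Fin r, ∃ ρ ∈ dihedralMaps n,
      ∀ i, s((blockChord n m r x i).1, (blockChord n m r x i).2).map ρ ∈ G.edgeSet := by
    intro x
    obtain ⟨f, hf⟩ := hG _ (cycleWithChords_blockChord_mem_Ofam hr hm hmn x)
    refine ⟨f, hf.mem_dihedralMaps (by omega), fun i => hf.2.1 _ _ ?_⟩
    refine cycleWithChords_adj_of_mem (mem_image_of_mem _ (mem_univ i)) (Fin.ne_of_val_ne ?_)
    have := val_blockChord hr hm x i
    omega
  calc r ^ (2 * h) = Nat.card (Fin h → Fin r × Fin r) := by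
        rw [Nat.card_fun, Nat.card_prod, Nat.card_fin, Nat.card_fin, pow_mul, sq]
    _ ≤ (dihedralMaps n).card * G.edgeSet.ncard ^ h :=
      card_le_card_mul_ncard_edgeSet_pow G _ (fun _ => injective_of_mem_dihedralMaps) _
        (blockChord_injective hr hm) hcarry
    _ ≤ 2 * n * G.edgeSet.ncard ^ h := Nat.mul_le_mul_right _ card_dihedralMaps_le

lemma inv_mul_rpow_div_le_of_pow_le {N E C : ℝ} {k h : ℕ} (hh : h ≠ 0) (hN : 0 ≤ N)
    (hE : 0 ≤ E) (hC : 1 ≤ C) (hNE : N ^ k ≤ C * E ^ h) : C⁻¹ * N ^ ((k : ℝ) / h) ≤ E := by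
  refine le_of_pow_le_pow_left₀ hh hE ?_
  have hNk : (N ^ ((k : ℝ) / h)) ^ h = N ^ k := by
    rw [← Real.rpow_natCast, ← Real.rpow_mul hN, div_mul_cancel₀ _ (Nat.cast_ne_zero.2 hh),
      Real.rpow_natCast]
  calc (C⁻¹ * N ^ ((k : ℝ) / h)) ^ h = C⁻¹ ^ h * N ^ k := by rw [mul_pow, hNk]
    _ ≤ C⁻¹ * N ^ k := by
      gcongr
      exact pow_le_of_le_one (by positivity) (inv_le_one_of_one_le₀ hC) hh
    _ ≤ E ^ h := by
      rw [inv_mul_le_iff₀ (by positivity)]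
      exact hNE

theorem pow_le_mul_ncard_edgeSet_pow {h n : ℕ} (hh : 2 ≤ h) (hn : 3 * h ≤ n)
    (G : SimpleGraph (Fin n)) (hG : UniversalFor G (Ofam h n)) :
    n ^ (2 * h - 1) ≤ 2 * (6 * h) ^ (2 * h) * G.edgeSet.ncard ^ h := by
  refine Nat.le_of_mul_le_mul_left ?_ (by omega : 0 < n)
  calc n * n ^ (2 * h - 1) = n ^ (2 * h) := by rw [← pow_succ']; congr 1; omega
    _ ≤ (6 * h * (n / h / 3)) ^ (2 * h) := Nat.pow_le_pow_left (le_mul_div_div (by omega) hn) _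
    _ ≤ (6 * h) ^ (2 * h) * (2 * n * G.edgeSet.ncard ^ h) := by
      rw [mul_pow]
      exact Nat.mul_le_mul_left _ (pow_div_div_le_mul_ncard_edgeSet_pow hh hn G hG)
    _ = n * (2 * (6 * h) ^ (2 * h) * G.edgeSet.ncard ^ h) := by ring

/-- For every `h ≥ 2` and `n ≥ 3h²`, every `n`-vertex convex geometric graph that is
universal for `O_h(n)` has at least `c_h · n^(2-1/h)` edges. -/
theorem stmt_4 (h : ℕ) (hh : 2 ≤ h) :
    ∃ c : ℝ, 0 < c ∧ ∀ n : ℕ, 3 * h ^ 2 ≤ n →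
      ∀ G : SimpleGraph (Fin n), UniversalFor G (Ofam h n) →
        c * (n : ℝ) ^ ((2 : ℝ) - 1 / (h : ℝ)) ≤ (G.edgeSet.ncard : ℝ) := by
  refine ⟨(2 * (6 * h) ^ (2 * h) : ℝ)⁻¹, by positivity, fun n hn G hG => ?_⟩
  have hexp : ((2 * h - 1 : ℕ) : ℝ) / h = 2 - 1 / h := by
    rw [Nat.cast_sub (by omega)]
    push_cast
    field_simp
  have hC : (1 : ℝ) ≤ 2 * (6 * h) ^ (2 * h) := by
    have : (1 : ℝ) ≤ (6 * h) ^ (2 * h) := one_le_pow₀ (by norm_cast; omega)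
    linarith
  rw [← hexp]
  refine inv_mul_rpow_div_le_of_pow_le (by omega) (by positivity) (by positivity) hC ?_
  exact_mod_cast pow_le_mul_ncard_edgeSet_pow hh (by nlinarith) G hG
end

section
/- Let n ∈ ℕ and let S = {0, 1, …, ⌊√n⌋ − 1} ∪ {i·⌊√n⌋ : 1 ≤ i ≤ ⌊√n⌋}. Then for every integer d with 1 ≤ d ≤ ⌊n/2⌋, there exist a, b ∈ S with b − a = d. -/
/- With `s = ⌊√n⌋`, the set is a baby-step giant-step system: every `d` with `1 ≤ d ≤ s²` is
reached from a small element `a < s` by rounding `d` up to the next multiple `i·s` of `s`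
(if `d - 1 = q·s + r` with `r < s`, then `(s - 1 - r) + d = (q + 1)·s`), and
`n / 2 ≤ s²` because `n < (s + 1)²`. -/

/-- `S = {0,…,⌊√n⌋−1} ∪ {i·⌊√n⌋ : 1 ≤ i ≤ ⌊√n⌋}`. -/
def sqrtSet (n : ℕ) : Finset ℕ :=
  Finset.range (Nat.sqrt n) ∪ (Finset.Icc 1 (Nat.sqrt n)).image (fun i => i * Nat.sqrt n)

theorem Nat.div_two_le_sqrt_mul_sqrt (n : ℕ) : n / 2 ≤ Nat.sqrt n * Nat.sqrt n := by
  have hlt : n < (Nat.sqrt n + 1) * (Nat.sqrt n + 1) := Nat.lt_succ_sqrt n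
  have hamgm := two_mul_le_add_sq (Nat.sqrt n) 1
  have hn : n ≤ 2 * (Nat.sqrt n * Nat.sqrt n) + 1 := by nlinarith
  omega

theorem Nat.exists_add_eq_mul_of_le_mul_self {s d : ℕ} (hd : 0 < d) (hds : d ≤ s * s) :
    ∃ a < s, ∃ i ∈ Finset.Icc 1 s, a + d = i * s := by
  have hs : 0 < s := Nat.pos_of_mul_pos_left (hd.trans_le hds)
  obtain ⟨q, r, hr, hdecomp⟩ : ∃ q r, r < s ∧ s * q + r = d - 1 :=
    ⟨_, _, Nat.mod_lt _ hs, Nat.div_add_mod _ _⟩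
  have hq : q < s := Nat.lt_of_mul_lt_mul_left (a := s) (by omega)
  refine ⟨s - 1 - r, by omega, q + 1, Finset.mem_Icc.2 ⟨by omega, hq⟩, ?_⟩
  rw [add_one_mul, mul_comm]
  omega

theorem stmt_6_general (n : ℕ) (d : ℕ) (hd1 : 1 ≤ d) (hd2 : d ≤ n / 2) :
    ∃ a ∈ sqrtSet n, ∃ b ∈ sqrtSet n, a + d = b := by
  obtain ⟨a, ha, i, hi, hsum⟩ :=
    Nat.exists_add_eq_mul_of_le_mul_self hd1 (hd2.trans (Nat.div_two_le_sqrt_mul_sqrt n))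
  exact ⟨a, Finset.mem_union_left _ (Finset.mem_range.2 ha),
    i * Nat.sqrt n, Finset.mem_union_right _ (Finset.mem_image_of_mem _ hi), hsum⟩

/-- For every `1 ≤ d ≤ ⌊n/2⌋` there are `a, b ∈ S` with `b - a = d`. -/
theorem stmt_6 (n : ℕ) (hn : 0 < n) (d : ℕ) (hd1 : 1 ≤ d) (hd2 : d ≤ n / 2) :
    ∃ a ∈ sqrtSet n, ∃ b ∈ sqrtSet n, a + d = b :=
  stmt_6_general n d hd1 hd2
end

section
/- Define sequences of positive integers recursively: π_1 = (1), and for m = 2^h − 1 with h ≥ 2, π_m = π_{(m−1)/2} · (m) · π_{(m−1)/2} (concatenation with m in the middle); for general n, π_n is the prefix of length n of π_m for any m = 2^h − 1 with m ≥ n. Then for every n ∈ ℕ and every x with 1 ≤ x ≤ n, the maximum over any x consecutive elements of π_n is at least x. -/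
/-- The ruler sequence: `rulerList k` is `π_m` for `m = 2^(k+1) - 1`, defined by
`π_1 = (1)` and `π_m = π_{(m-1)/2} (m) π_{(m-1)/2}`. -/
def rulerList : ℕ → List ℕ
  | 0 => [1]
  | k + 1 => rulerList k ++ [2 ^ (k + 2) - 1] ++ rulerList k

/-- `π_n`: the prefix of length `n` of a long enough ruler sequence. -/
def pin (n : ℕ) : List ℕ := (rulerList n).take n

/-!
Position `j` (0-indexed) of a ruler sequence carries `2^(v+1) - 1`, where `2^v` is the largest
power of two dividing `j + 1`. Among any `x` consecutive positions there is a `j` with `j + 1`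
divisible by `2^t`, where `2^t ≤ x < 2^(t+1)`, and the entry there is at least `2^(t+1) - 1 ≥ x`.
-/

lemma le_of_two_pow_dvd_of_lt {t k m : ℕ} (hm : 0 < m) (hdvd : 2 ^ t ∣ m)
    (hlt : m < 2 ^ (k + 1)) : t ≤ k :=
  Nat.lt_succ_iff.mp <|
    (Nat.pow_lt_pow_iff_right one_lt_two).mp ((Nat.le_of_dvd hm hdvd).trans_lt hlt)

lemma exists_dvd_succ_mem_window {m x : ℕ} (i : ℕ) (hm : 0 < m) (hmx : m ≤ x) :
    ∃ j, i ≤ j ∧ j < i + x ∧ m ∣ j + 1 := by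
  have hnext : m * (i / m + 1) = m * (i / m) + m := mul_add_one m (i / m)
  have := Nat.div_add_mod i m
  have := Nat.mod_lt i hm
  refine ⟨m * (i / m + 1) - 1, by omega, by omega, ?_⟩
  rw [Nat.sub_add_cancel (by omega)]
  exact dvd_mul_right m _

lemma length_rulerList (k : ℕ) : (rulerList k).length = 2 ^ (k + 1) - 1 := by
  induction k with
  | zero => simp [rulerList]
  | succ k ih =>
    simp only [rulerList, List.length_append, ih, List.length_singleton]
    have := Nat.one_le_two_pow (n := k + 1)
    rw [pow_succ 2 (k + 1)]
    omega

lemma le_getD_rulerList {k t j : ℕ} (hj : j < 2 ^ (k + 1) - 1) (hdvd : 2 ^ t ∣ j + 1) :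
    2 ^ (t + 1) - 1 ≤ (rulerList k).getD j 0 := by
  induction k generalizing j with
  | zero =>
    obtain rfl : t = 0 := Nat.le_zero.mp (le_of_two_pow_dvd_of_lt j.succ_pos hdvd (by omega))
    obtain rfl : j = 0 := by omega
    simp [rulerList]
  | succ k ih =>
    have hlen := length_rulerList k
    have htk : t ≤ k + 1 := le_of_two_pow_dvd_of_lt j.succ_pos hdvd (by omega)
    have := Nat.one_le_two_pow (n := k + 1)
    have := pow_succ' 2 (k + 1)
    rcases lt_trichotomy j (2 ^ (k + 1) - 1) with hleft | rfl | hright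
    · rw [rulerList, List.getD_append _ _ _ _ (by simp; omega),
        List.getD_append _ _ _ _ (by omega)]
      exact ih hleft hdvd
    · rw [rulerList, List.getD_append _ _ _ _ (by simp; omega),
        List.getD_append_right _ _ _ _ (by omega), hlen, Nat.sub_self, List.getD_cons_zero]
      have := Nat.pow_le_pow_right two_pos (by omega : t + 1 ≤ k + 2)
      omega
    · rw [rulerList, List.getD_append_right _ _ _ _ (by simp; omega)]
      simp only [List.length_append, hlen, List.length_singleton]
      have hshift : j - (2 ^ (k + 1) - 1 + 1) + 1 = j + 1 - 2 ^ (k + 1) := by omega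
      exact ih (by omega) (hshift ▸ Nat.dvd_sub hdvd (Nat.pow_dvd_pow 2 htk))

lemma getD_pin {n j : ℕ} (hj : j < n) : (pin n).getD j 0 = (rulerList n).getD j 0 := by
  simp only [pin, List.getD_eq_getElem?_getD, List.getElem?_take_of_lt hj]

theorem stmt_8_general (n x : ℕ) (hx1 : 1 ≤ x) (i : ℕ) (hi : i + x ≤ n) :
    ∃ j, i ≤ j ∧ j < i + x ∧ x ≤ (pin n).getD j 0 := by
  set t := Nat.log 2 x
  have hxt : x < 2 ^ (t + 1) := Nat.lt_pow_succ_log_self one_lt_two x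
  obtain ⟨j, hij, hji, hdvd⟩ :=
    exists_dvd_succ_mem_window i (Nat.two_pow_pos t) (Nat.pow_log_le_self 2 (by omega))
  have hjn : j < 2 ^ (n + 1) - 1 := by
    have := Nat.lt_two_pow_self (n := n)
    have := pow_succ 2 n
    omega
  refine ⟨j, hij, hji, ?_⟩
  rw [getD_pin (by omega)]
  have := le_getD_rulerList hjn hdvd
  omega

/-- For every `1 ≤ x ≤ n`, any `x` consecutive elements of `π_n` contain an
element that is at least `x` (positions are 0-indexed). -/
theorem stmt_8 (n x : ℕ) (hx1 : 1 ≤ x) (hx2 : x ≤ n) (i : ℕ) (hi : i + x ≤ n) :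
    ∃ j, i ≤ j ∧ j < i + x ∧ x ≤ (pin n).getD j 0 :=
  stmt_8_general n x hx1 i hi
end
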